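/- Let Δ be a finite set of clocks. Let R(Δ) be the category whose objects are triples (ℰ, σ, δ) with ℰ a finite subset of the set of clocks, σ : Δ → ℰ a function and δ : ℰ → ℕ, and whose morphisms (ℰ, σ, δ) → (ℰ', σ', δ') are functions τ : ℰ → ℰ' with τ ∘ σ = σ' and δ' ∘ τ ≤ δ pointwise, and let S(Δ) be the full subcategory of R(Δ) on those objects (ℰ, σ, δ) for which σ is surjective. Then the poset P(Δ) is equivalent, as a category, to the opposite category S(Δ)ᵒᵖ. -/

import Mathlib

open CategoryTheory

/-- An object of `R(Δ)`: a finite set of clocks `ℰ`, a function `σ : Δ → ℰ` and a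
function `δ : ℰ → ℕ`. -/
structure RObj (C : Type) (Δ : Finset C) where
  E : Finset C
  σ : {k // k ∈ Δ} → {x // x ∈ E}
  d : {x // x ∈ E} → ℕ

/-- A morphism of `R(Δ)`: a function `τ : ℰ → ℰ'` with `τ ∘ σ = σ'` and
`δ' ∘ τ ≤ δ` pointwise. -/
structure RHom {C : Type} {Δ : Finset C} (A B : RObj C Δ) where
  toFun : {x // x ∈ A.E} → {x // x ∈ B.E}
  comm : ∀ k, toFun (A.σ k) = B.σ k
  le : ∀ x, B.d (toFun x) ≤ A.d x

theorem RHom.ext' {C : Type} {Δ : Finset C} {A B : RObj C Δ} {f g : RHom A B}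
    (h : f.toFun = g.toFun) : f = g := by
  cases f; cases g; cases h; rfl

/-- The category `R(Δ)`. -/
instance RCat (C : Type) (Δ : Finset C) : Category (RObj C Δ) where
  Hom := RHom
  id _ := ⟨fun x => x, fun _ => rfl, fun _ => le_rfl⟩
  comp f g := ⟨RHom.toFun g ∘ RHom.toFun f,
    fun k => by dsimp; rw [RHom.comm f k, RHom.comm g k],
    fun x => le_trans (RHom.le g _) (RHom.le f _)⟩
  id_comp _ := rfl
  comp_id _ := rfl
  assoc _ _ _ := rfl

/-- An element of the poset `P(Δ)`: an equivalence relation `E` on `Δ` together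
with a function `d : Δ → ℕ` respecting `E`. -/
structure PObj (C : Type) (Δ : Finset C) where
  E : Setoid {k // k ∈ Δ}
  d : {k // k ∈ Δ} → ℕ
  resp : ∀ a b, E.r a b → d a = d b

/-- The order on `P(Δ)`: `(E, d) ≤ (E', d')` iff `E' ⊆ E` (as subsets of `Δ × Δ`)
and `d ≤ d'` pointwise. -/
instance PObj.instPreorder (C : Type) (Δ : Finset C) : Preorder (PObj C Δ) where
  le x y := (∀ a b, y.E.r a b → x.E.r a b) ∧ ∀ k, x.d k ≤ y.d k
  le_refl _ := ⟨fun _ _ h => h, fun _ => le_rfl⟩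
  le_trans _ _ _ h₁ h₂ :=
    ⟨fun a b h => h₁.1 a b (h₂.1 a b h), fun k => (h₁.2 k).trans (h₂.2 k)⟩

/-!
Both categories are thin: a morphism out of `(ℰ, σ, δ)` with `σ` surjective is determined by
`τ (σ k) = σ' k`. Sending `(ℰ, σ, δ)` to `(ker σ, δ ∘ σ)` is a functor `S(Δ)ᵒᵖ ⥤ P(Δ)`; it is full
because a morphism `A ⟶ B` exists as soon as `ker σ_A ⊆ ker σ_B` and `δ_B ∘ σ_B ≤ δ_A ∘ σ_A`, and
essentially surjective because `(E, d)` is realised by taking for `ℰ` one representative clock of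
each `E`-class.
-/

variable {C : Type} {Δ : Finset C}

def RObj.toPObj (A : RObj C Δ) : PObj C Δ where
  E := Setoid.ker A.σ
  d := A.d ∘ A.σ
  resp _ _ h := congrArg A.d h

theorem PObj.ext {x y : PObj C Δ} (hE : x.E = y.E) (hd : x.d = y.d) : x = y := by
  cases x; cases y; subst hE hd; rfl

namespace RHom

variable {A B : RObj C Δ}

theorem toPObj_le (f : RHom A B) : B.toPObj ≤ A.toPObj := by
  refine ⟨fun a b (h : A.σ a = A.σ b) => ?_, fun k => ?_⟩
  · change B.σ a = B.σ b
    rw [← f.comm a, ← f.comm b, h]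
  · change B.d (B.σ k) ≤ A.d (A.σ k)
    rw [← f.comm k]
    exact f.le _

theorem subsingleton_of_surjective (hA : Function.Surjective A.σ) : Subsingleton (RHom A B) :=
  ⟨fun f g => RHom.ext' <| funext fun x => by
    obtain ⟨k, rfl⟩ := hA x
    rw [f.comm, g.comm]⟩

/-- Over a surjective source `τ` must be `σ_A k ↦ σ_B k`; the inclusion of kernels makes this
well defined. -/
noncomputable def ofToPObjLE (hA : Function.Surjective A.σ) (h : B.toPObj ≤ A.toPObj) :
    RHom A B where
  toFun e := B.σ (Function.surjInv hA e)
  comm k := h.1 _ _ (Function.surjInv_eq hA (A.σ k))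
  le e := by
    have : B.d (B.σ (Function.surjInv hA e)) ≤ A.d (A.σ (Function.surjInv hA e)) :=
      h.2 (Function.surjInv hA e)
    rwa [Function.surjInv_eq hA e] at this

end RHom

namespace PObj

open scoped Classical

noncomputable def rep (x : PObj C Δ) (k : {k // k ∈ Δ}) : {k // k ∈ Δ} :=
  (Quotient.mk x.E k).out

theorem rep_rel (x : PObj C Δ) (k : {k // k ∈ Δ}) : x.E.r (x.rep k) k :=
  Quotient.mk_out k

theorem rep_eq_rep_iff (x : PObj C Δ) {a b : {k // k ∈ Δ}} : x.rep a = x.rep b ↔ x.E.r a b :=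
  Quotient.out_inj.trans Quotient.eq

noncomputable def reps (x : PObj C Δ) : Finset C :=
  Δ.attach.image fun k => (x.rep k).val

theorem mem_of_mem_reps (x : PObj C Δ) {c : C} (hc : c ∈ x.reps) : c ∈ Δ := by
  obtain ⟨k, -, rfl⟩ := Finset.mem_image.mp hc
  exact (x.rep k).prop

noncomputable def toRObj (x : PObj C Δ) : RObj C Δ where
  E := x.reps
  σ k := ⟨(x.rep k).val, Finset.mem_image_of_mem _ (Finset.mem_attach _ k)⟩
  d e := x.d ⟨e.val, x.mem_of_mem_reps e.prop⟩

theorem toRObj_surjective (x : PObj C Δ) : Function.Surjective x.toRObj.σ := by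
  rintro ⟨c, hc⟩
  obtain ⟨k, -, rfl⟩ := Finset.mem_image.mp hc
  exact ⟨k, rfl⟩

theorem toRObj_toPObj (x : PObj C Δ) : x.toRObj.toPObj = x := by
  refine PObj.ext (Setoid.ext fun a b => ?_) (funext fun k => x.resp _ _ (x.rep_rel k))
  change x.toRObj.σ a = x.toRObj.σ b ↔ _
  rw [← x.rep_eq_rep_iff, Subtype.ext_iff, Subtype.ext_iff]
  rfl

end PObj

abbrev SCat (C : Type) (Δ : Finset C) :=
  ObjectProperty.FullSubcategory fun A : RObj C Δ => Function.Surjective A.σ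

noncomputable def SCat.toPObj : (SCat C Δ)ᵒᵖ ⥤ PObj C Δ where
  obj A := A.unop.obj.toPObj
  map f := homOfLE f.unop.hom.toPObj_le

instance : (SCat.toPObj (C := C) (Δ := Δ)).IsEquivalence where
  faithful := ⟨fun {_ B} _ _ _ => Quiver.Hom.unop_inj <| InducedCategory.hom_ext <|
    (RHom.subsingleton_of_surjective B.unop.property).elim _ _⟩
  full := ⟨fun {_ B} g =>
    ⟨(ObjectProperty.homMk (RHom.ofToPObjLE B.unop.property (leOfHom g))).op, rfl⟩⟩
  essSurj := ⟨fun x =>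
    ⟨Opposite.op ⟨x.toRObj, x.toRObj_surjective⟩, ⟨eqToIso x.toRObj_toPObj⟩⟩⟩

theorem statement_17_general (C : Type) (Δ : Finset C) :
    Nonempty (PObj C Δ ≌
      (ObjectProperty.FullSubcategory fun A : RObj C Δ => Function.Surjective A.σ)ᵒᵖ) :=
  ⟨SCat.toPObj.asEquivalence.symm⟩

/-- The poset `P(Δ)` is equivalent, as a category, to the opposite of `S(Δ)`, the
full subcategory of `R(Δ)` on objects whose map `σ : Δ → ℰ` is surjective. -/
theorem statement_17 (C : Type) [Countable C] [Infinite C] (Δ : Finset C) :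
    Nonempty (PObj C Δ ≌
      (ObjectProperty.FullSubcategory fun A : RObj C Δ => Function.Surjective A.σ)ᵒᵖ) :=
  statement_17_general C Δ
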